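/- For the function G(x, θ) = −(1/4π)·log(cosh x − cos θ) on the flat cylinder ℝ × (ℝ/2πℤ), the level set G^{−1}(c) is connected (a single closed curve) for c > −(1/4π)·log 2, and has exactly two connected components for c < −(1/4π)·log 2. -/
import Mathlib


open Real

/-- The Green's function `G(x, θ) = −(1/4π) log (cosh x − cos θ)` on the flat cylinder
`ℝ × (ℝ/2πℤ)`. -/
noncomputable def Gcyl2 : ℝ × AddCircle (2 * π) → ℝ :=
  fun p => -(1 / (4 * π)) * Real.log (Real.cosh p.1 - Real.cos_periodic.lift p.2)

/-- The pole of the cylinder Green's function. -/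
noncomputable def cylPole : ℝ × AddCircle (2 * π) := (0, (0 : ℝ))

/-- The level set `G⁻¹(c)` (away from the pole) of the cylinder Green's function. -/
noncomputable def cylLevel (c : ℝ) : Set (ℝ × AddCircle (2 * π)) :=
  {p | p ≠ cylPole ∧ Gcyl2 p = c}

open Set

/- ### Auxiliary: inverse hyperbolic cosine -/

noncomputable def arch (u : ℝ) : ℝ := Real.log (u + Real.sqrt (u ^ 2 - 1))

lemma arch_nonneg {u : ℝ} (hu : 1 ≤ u) : 0 ≤ arch u :=
  Real.log_nonneg (by nlinarith [Real.sqrt_nonneg (u ^ 2 - 1)])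

lemma arch_pos {u : ℝ} (hu : 1 < u) : 0 < arch u :=
  Real.log_pos (by nlinarith [Real.sqrt_nonneg (u ^ 2 - 1)])

lemma arch_one : arch 1 = 0 := by
  simp [arch]

lemma cosh_arch {u : ℝ} (hu : 1 ≤ u) : Real.cosh (arch u) = u := by
  have hs : Real.sqrt (u ^ 2 - 1) ^ 2 = u ^ 2 - 1 := Real.sq_sqrt (by nlinarith)
  set s := Real.sqrt (u ^ 2 - 1) with hsdef
  have hs0 : 0 ≤ s := Real.sqrt_nonneg _
  have hpos : 0 < u + s := by nlinarith
  rw [arch, Real.cosh_eq, Real.exp_log hpos, Real.exp_neg, Real.exp_log hpos]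
  have hinv : (u + s)⁻¹ = u - s := by
    rw [inv_eq_iff_eq_inv]
    rw [eq_comm, inv_eq_iff_eq_inv] at *
    field_simp
    nlinarith
  rw [hinv]; ring

lemma eq_arch_of_cosh {x u : ℝ} (hx : 0 ≤ x) (h : Real.cosh x = u) : x = arch u := by
  have h1 : 1 ≤ u := h ▸ Real.one_le_cosh x
  have hsq : Real.sinh x ^ 2 = u ^ 2 - 1 := by nlinarith [Real.cosh_sq x]
  have hsinh : Real.sinh x = Real.sqrt (u ^ 2 - 1) := by
    rw [← hsq, Real.sqrt_sq (Real.sinh_nonneg_iff.mpr hx)]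
  have hexp : Real.exp x = u + Real.sqrt (u ^ 2 - 1) := by
    rw [← Real.cosh_add_sinh, h, hsinh]
  rw [arch, ← hexp, Real.log_exp]

lemma continuousOn_arch : ContinuousOn arch (Set.Ici 1) := by
  have hf : Continuous fun u : ℝ => u + Real.sqrt (u ^ 2 - 1) :=
    continuous_id.add ((continuous_pow 2).sub continuous_const).sqrt
  refine Real.continuousOn_log.comp hf.continuousOn fun u hu => ?_
  have : (1:ℝ) ≤ u := hu
  have := Real.sqrt_nonneg (u ^ 2 - 1)
  simp only [Set.mem_compl_iff, Set.mem_singleton_iff]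
  intro h
  nlinarith

/- ### Auxiliary: the cosine lift on the circle -/

lemma continuous_coslift : Continuous (Real.cos_periodic.lift) :=
  Real.continuous_cos.quotient_liftOn' _

lemma coslift_coe (t : ℝ) : Real.cos_periodic.lift ((t : ℝ) : AddCircle (2 * π)) = Real.cos t :=
  Real.cos_periodic.lift_coe t

lemma exists_rep (θ : AddCircle (2 * π)) :
    ∃ t : ℝ, -π < t ∧ t ≤ π ∧ ((t : ℝ) : AddCircle (2 * π)) = θ := by
  haveI : Fact (0 < 2 * π) := ⟨by positivity⟩
  set b := (AddCircle.equivIoc (2 * π) (-π)) θ with hb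
  refine ⟨b.1, b.2.1, by have := b.2.2; linarith, ?_⟩
  exact (AddCircle.equivIoc (2 * π) (-π)).symm_apply_apply θ

/- ### Auxiliary: the function `F p = cosh x − cos θ` -/

noncomputable def Fcyl : ℝ × AddCircle (2 * π) → ℝ :=
  fun p => Real.cosh p.1 - Real.cos_periodic.lift p.2

lemma continuous_Fcyl : Continuous Fcyl :=
  (Real.continuous_cosh.comp continuous_fst).sub
    (continuous_coslift.comp continuous_snd)

lemma Fcyl_coe (x t : ℝ) : Fcyl (x, ((t : ℝ) : AddCircle (2 * π))) = Real.cosh x - Real.cos t := by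
  simp [Fcyl, coslift_coe]

lemma cosh_eq_one {x : ℝ} (h : Real.cosh x = 1) : x = 0 := by
  rcases le_or_gt 0 x with hx | hx
  · have := eq_arch_of_cosh hx h
    rwa [arch_one] at this
  · have := eq_arch_of_cosh (le_of_lt (neg_pos.mpr hx)) (by rw [Real.cosh_neg, h])
    rw [arch_one] at this
    linarith

lemma Fcyl_eq_zero_iff (p : ℝ × AddCircle (2 * π)) : Fcyl p = 0 ↔ p = cylPole := by
  constructor
  · intro h
    obtain ⟨t, ht1, ht2, ht3⟩ := exists_rep p.2
    have hF : Real.cosh p.1 - Real.cos t = 0 := by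
      rw [← Fcyl_coe p.1 t, ht3]
      exact h
    have h1 : 1 ≤ Real.cosh p.1 := Real.one_le_cosh p.1
    have h2 : Real.cos t ≤ 1 := Real.cos_le_one t
    have hcosh : Real.cosh p.1 = 1 := by linarith
    have hcos : Real.cos t = 1 := by linarith
    have hx : p.1 = 0 := cosh_eq_one hcosh
    have hpi : (0:ℝ) < π := Real.pi_pos
    have ht0 : t = 0 :=
      (Real.cos_eq_one_iff_of_lt_of_lt (by linarith) (by linarith)).mp hcos
    have : p = (p.1, p.2) := rfl
    rw [this, hx, ← ht3, ht0]
    rfl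
  · intro h
    rw [h]
    show Fcyl (0, ((0:ℝ) : AddCircle (2 * π))) = 0
    rw [Fcyl_coe]
    simp

lemma Fcyl_nonneg (p : ℝ × AddCircle (2 * π)) : 0 ≤ Fcyl p := by
  obtain ⟨t, _, _, ht3⟩ := exists_rep p.2
  have : Fcyl p = Real.cosh p.1 - Real.cos t := by rw [← Fcyl_coe p.1 t, ht3]
  rw [this]
  have := Real.one_le_cosh p.1
  have := Real.cos_le_one t
  linarith

lemma cylLevel_eq (c : ℝ) :
    cylLevel c = {p | Fcyl p = Real.exp (-(4 * π * c))} := by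
  have hpi : (0:ℝ) < π := Real.pi_pos
  ext p
  simp only [cylLevel, Set.mem_setOf_eq]
  constructor
  · rintro ⟨hne, hG⟩
    have hF0 : Fcyl p ≠ 0 := fun h => hne ((Fcyl_eq_zero_iff p).mp h)
    have hFpos : 0 < Fcyl p := lt_of_le_of_ne (Fcyl_nonneg p) (Ne.symm hF0)
    have hlog : Real.log (Fcyl p) = -(4 * π * c) := by
      have : -(1 / (4 * π)) * Real.log (Fcyl p) = c := hG
      field_simp at this
      linarith
    rw [← hlog, Real.exp_log hFpos]
  · intro hF
    have hFpos : 0 < Fcyl p := hF ▸ Real.exp_pos _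
    refine ⟨fun h => ?_, ?_⟩
    · have hz : Fcyl cylPole = 0 := (Fcyl_eq_zero_iff cylPole).mpr rfl
      rw [h, hz] at hFpos
      exact lt_irrefl 0 hFpos
    · show -(1 / (4 * π)) * Real.log (Fcyl p) = c
      rw [hF, Real.log_exp]
      field_simp

/- ### Parametrizations of the level curves -/

noncomputable def gplus (k : ℝ) : ℝ → ℝ × AddCircle (2 * π) :=
  fun t => (arch (k + Real.cos t), ((t : ℝ) : AddCircle (2 * π)))

noncomputable def gminus (k : ℝ) : ℝ → ℝ × AddCircle (2 * π) :=
  fun t => (-arch (k + Real.cos t), ((t : ℝ) : AddCircle (2 * π)))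

lemma Fcyl_gplus {k t : ℝ} (h : 1 ≤ k + Real.cos t) : Fcyl (gplus k t) = k := by
  show Fcyl (arch (k + Real.cos t), ((t : ℝ) : AddCircle (2 * π))) = k
  rw [Fcyl_coe, cosh_arch h]; ring

lemma Fcyl_gminus {k t : ℝ} (h : 1 ≤ k + Real.cos t) : Fcyl (gminus k t) = k := by
  show Fcyl (-arch (k + Real.cos t), ((t : ℝ) : AddCircle (2 * π))) = k
  rw [Fcyl_coe, Real.cosh_neg, cosh_arch h]; ring

lemma continuousOn_gplus (k : ℝ) {s : Set ℝ} (h : ∀ t ∈ s, 1 ≤ k + Real.cos t) :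
    ContinuousOn (gplus k) s := by
  apply ContinuousOn.prodMk
  · exact continuousOn_arch.comp
      (continuous_const.add Real.continuous_cos).continuousOn h
  · exact ((AddCircle.continuous_mk' (2 * π)).comp continuous_id).continuousOn

lemma continuousOn_gminus (k : ℝ) {s : Set ℝ} (h : ∀ t ∈ s, 1 ≤ k + Real.cos t) :
    ContinuousOn (gminus k) s := by
  apply ContinuousOn.prodMk
  · exact (continuousOn_arch.comp
      (continuous_const.add Real.continuous_cos).continuousOn h).neg
  · exact ((AddCircle.continuous_mk' (2 * π)).comp continuous_id).continuousOn

lemma level_decomp {k : ℝ} {p : ℝ × AddCircle (2 * π)} (hF : Fcyl p = k) :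
    ∃ t : ℝ, -π < t ∧ t ≤ π ∧
      Real.cosh p.1 = k + Real.cos t ∧ (p = gplus k t ∨ p = gminus k t) := by
  obtain ⟨t, ht1, ht2, ht3⟩ := exists_rep p.2
  have hcosh : Real.cosh p.1 = k + Real.cos t := by
    have : Fcyl p = Real.cosh p.1 - Real.cos t := by rw [← Fcyl_coe p.1 t, ht3]
    rw [this] at hF
    linarith
  refine ⟨t, ht1, ht2, hcosh, ?_⟩
  rcases le_or_gt 0 p.1 with hx | hx
  · left
    have := eq_arch_of_cosh hx hcosh
    show p = (arch (k + Real.cos t), ((t : ℝ) : AddCircle (2 * π)))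
    rw [← this, ht3]
  · right
    have hneg : Real.cosh (-p.1) = k + Real.cos t := by rw [Real.cosh_neg]; exact hcosh
    have := eq_arch_of_cosh (by linarith : (0:ℝ) ≤ -p.1) hneg
    show p = (-arch (k + Real.cos t), ((t : ℝ) : AddCircle (2 * π)))
    rw [← this, neg_neg, ht3]

/-- For `G(x, θ) = −(1/4π) log (cosh x − cos θ)` on the flat cylinder, the level set
`G⁻¹(c)` is connected (a single closed curve) when `c > −(1/4π) log 2`, and has exactly two
connected components when `c < −(1/4π) log 2`. -/
theorem cylinder_green_level_sets :
    (∀ c : ℝ, -(1 / (4 * π)) * Real.log 2 < c → IsConnected (cylLevel c)) ∧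
    (∀ c : ℝ, c < -(1 / (4 * π)) * Real.log 2 →
      ∃ A B : Set (ℝ × AddCircle (2 * π)),
        A ∪ B = cylLevel c ∧ Disjoint A B ∧ IsConnected A ∧ IsConnected B ∧
          IsClosed A ∧ IsClosed B) := by
  have hpi : (0:ℝ) < π := Real.pi_pos
  constructor
  · -- connected case: `k < 2`
    intro c hc
    set k := Real.exp (-(4 * π * c)) with hkdef
    have hk0 : 0 < k := Real.exp_pos _
    have hk2 : k < 2 := by
      have h4 : (0:ℝ) < 4 * π := by positivity
      have hc' : -Real.log 2 / (4 * π) < c := by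
        rw [show -Real.log 2 / (4 * π) = -(1 / (4 * π)) * Real.log 2 by ring]
        exact hc
      have h1 : -(4 * π * c) < Real.log 2 := by
        have := (div_lt_iff₀ h4).mp hc'
        linarith
      calc k < Real.exp (Real.log 2) := Real.exp_lt_exp.mpr h1
        _ = 2 := Real.exp_log two_pos
    set θ₀ := Real.arccos (1 - k) with hθdef
    have hθ0 : 0 ≤ θ₀ := Real.arccos_nonneg _
    have hθπ : θ₀ ≤ π := Real.arccos_le_pi _
    have hcosθ₀ : Real.cos θ₀ = 1 - k :=
      Real.cos_arccos (by linarith) (by linarith)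
    have hcos_ge : ∀ t ∈ Set.Icc (-θ₀) θ₀, 1 ≤ k + Real.cos t := by
      intro t ht
      have habs : |t| ≤ θ₀ := abs_le.mpr ⟨ht.1, ht.2⟩
      have : Real.cos θ₀ ≤ Real.cos |t| :=
        Real.cos_le_cos_of_nonneg_of_le_pi (abs_nonneg t) hθπ habs
      rw [Real.cos_abs, hcosθ₀] at this
      linarith
    set Ap := gplus k '' Set.Icc (-θ₀) θ₀ with hApdef
    set Am := gminus k '' Set.Icc (-θ₀) θ₀ with hAmdef
    have hIcc : IsConnected (Set.Icc (-θ₀) θ₀) := isConnected_Icc (by linarith)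
    have hconnp : IsConnected Ap := hIcc.image _ (continuousOn_gplus k hcos_ge)
    have hconnm : IsConnected Am := hIcc.image _ (continuousOn_gminus k hcos_ge)
    have hk1 : k + Real.cos θ₀ = 1 := by rw [hcosθ₀]; ring
    have hmeet : gplus k θ₀ = gminus k θ₀ := by
      show (arch (k + Real.cos θ₀), _) = (-arch (k + Real.cos θ₀), _)
      rw [hk1, arch_one]
      norm_num
    have hθmem : θ₀ ∈ Set.Icc (-θ₀) θ₀ := ⟨by linarith, le_refl _⟩
    have hinter : (Ap ∩ Am).Nonempty := by
      refine ⟨gplus k θ₀, ⟨θ₀, hθmem, rfl⟩, ⟨θ₀, hθmem, ?_⟩⟩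
      exact hmeet.symm
    have hunion : cylLevel c = Ap ∪ Am := by
      rw [cylLevel_eq]
      ext p
      constructor
      · intro hF
        obtain ⟨t, ht1, ht2, hcosh, hpt⟩ := level_decomp hF
        have hct : 1 - k ≤ Real.cos t := by
          have := Real.one_le_cosh p.1
          linarith
        have habsπ : |t| ≤ π := abs_le.mpr ⟨by linarith, ht2⟩
        have habs : |t| ≤ θ₀ := by
          by_contra hlt
          push_neg at hlt
          have : Real.cos |t| < Real.cos θ₀ :=
            Real.cos_lt_cos_of_nonneg_of_le_pi hθ0 habsπ hlt
          rw [Real.cos_abs, hcosθ₀] at this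
          linarith
        have htm : t ∈ Set.Icc (-θ₀) θ₀ := by
          rcases abs_le.mp habs with ⟨h1, h2⟩
          exact ⟨h1, h2⟩
        rcases hpt with h | h
        · exact Or.inl ⟨t, htm, h.symm⟩
        · exact Or.inr ⟨t, htm, h.symm⟩
      · rintro (⟨t, htm, rfl⟩ | ⟨t, htm, rfl⟩)
        · exact Fcyl_gplus (hcos_ge t htm)
        · exact Fcyl_gminus (hcos_ge t htm)
    rw [hunion]
    exact IsConnected.union hinter hconnp hconnm
  · -- two components case: `k > 2`
    intro c hc
    set k := Real.exp (-(4 * π * c)) with hkdef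
    have hk2 : 2 < k := by
      have h4 : (0:ℝ) < 4 * π := by positivity
      have hc' : c < -Real.log 2 / (4 * π) := by
        rw [show -Real.log 2 / (4 * π) = -(1 / (4 * π)) * Real.log 2 by ring]
        exact hc
      have h1 : Real.log 2 < -(4 * π * c) := by
        have := (lt_div_iff₀ h4).mp hc'
        linarith
      calc (2:ℝ) = Real.exp (Real.log 2) := (Real.exp_log two_pos).symm
        _ < k := Real.exp_lt_exp.mpr h1
    have hcos_gt : ∀ t : ℝ, 1 < k + Real.cos t := by
      intro t
      have := Real.neg_one_le_cos t
      linarith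
    set A := gplus k '' Set.univ with hAdef
    set B := gminus k '' Set.univ with hBdef
    have hApos : ∀ p ∈ A, 0 < p.1 := by
      rintro p ⟨t, -, rfl⟩
      exact arch_pos (hcos_gt t)
    have hBneg : ∀ p ∈ B, p.1 < 0 := by
      rintro p ⟨t, -, rfl⟩
      show -arch (k + Real.cos t) < 0
      exact neg_lt_zero.mpr (arch_pos (hcos_gt t))
    have hAeq : A = {p | Fcyl p = k} ∩ {p | 0 ≤ p.1} := by
      ext p
      constructor
      · rintro ⟨t, -, rfl⟩
        exact ⟨Fcyl_gplus (hcos_gt t).le, (arch_pos (hcos_gt t)).le⟩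
      · rintro ⟨hF, hx⟩
        obtain ⟨t, -, -, -, hpt⟩ := level_decomp hF
        rcases hpt with h | h
        · exact ⟨t, trivial, h.symm⟩
        · exfalso
          have h2 := arch_pos (hcos_gt t)
          rw [h] at hx
          have hx' : (0:ℝ) ≤ -arch (k + Real.cos t) := hx
          linarith
    have hBeq : B = {p | Fcyl p = k} ∩ {p | p.1 ≤ 0} := by
      ext p
      constructor
      · rintro ⟨t, -, rfl⟩
        refine ⟨Fcyl_gminus (hcos_gt t).le, ?_⟩
        show -arch (k + Real.cos t) ≤ 0
        exact neg_nonpos.mpr (arch_pos (hcos_gt t)).le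
      · rintro ⟨hF, hx⟩
        obtain ⟨t, -, -, -, hpt⟩ := level_decomp hF
        rcases hpt with h | h
        · exfalso
          have h2 := arch_pos (hcos_gt t)
          rw [h] at hx
          have hx' : arch (k + Real.cos t) ≤ 0 := hx
          linarith
        · exact ⟨t, trivial, h.symm⟩
    refine ⟨A, B, ?_, ?_, ?_, ?_, ?_, ?_⟩
    · rw [cylLevel_eq]
      ext p
      constructor
      · rintro (h | h)
        · exact (hAeq ▸ h).1
        · exact (hBeq ▸ h).1
      · intro hF
        obtain ⟨t, -, -, -, hpt⟩ := level_decomp hF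
        rcases hpt with h | h
        · exact Or.inl ⟨t, trivial, h.symm⟩
        · exact Or.inr ⟨t, trivial, h.symm⟩
    · rw [Set.disjoint_left]
      intro p hpA hpB
      exact absurd (hBneg p hpB) (not_lt.mpr (hApos p hpA).le)
    · exact isConnected_univ.image _ (continuousOn_gplus k fun t _ => (hcos_gt t).le)
    · exact isConnected_univ.image _ (continuousOn_gminus k fun t _ => (hcos_gt t).le)
    · rw [hAeq]
      exact (isClosed_eq continuous_Fcyl continuous_const).inter
        (isClosed_le continuous_const continuous_fst)
    · rw [hBeq]
      exact (isClosed_eq continuous_Fcyl continuous_const).inter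
        (isClosed_le continuous_fst continuous_const)
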